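/- Suppose ι_X : A → X is a homotopy retract of κ_Y : B → Y, i.e. there is a homotopy commutative diagram with maps t : A → B, ζ : B → A, s : X → Y, f : Y → X such that κ_Y ∘ t ≃ s ∘ ι_X, ι_X ∘ ζ ≃ f ∘ κ_Y, f ∘ s ≃ id_X and ζ ∘ t ≃ id_A. Then relcat(ι_X) ≤ relcat(κ_Y). -/

import Mathlib

open unitInterval

universe u

noncomputable section

/-- A continuous map is a homotopy equivalence. -/
def IsHEquiv {X Y : Type u} [TopologicalSpace X] [TopologicalSpace Y] (f : C(X, Y)) : Prop :=
  ∃ g : C(Y, X), (f.comp g).Homotopic (ContinuousMap.id Y) ∧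
    (g.comp f).Homotopic (ContinuousMap.id X)

section HPO

variable {Z A B P : Type u} [TopologicalSpace Z] [TopologicalSpace A] [TopologicalSpace B]
  [TopologicalSpace P]

/-- Gluing relation of the double mapping cylinder. -/
inductive HPORel (f : C(Z, A)) (g : C(Z, B)) :
    (A ⊕ ((Z × I) ⊕ B)) → (A ⊕ ((Z × I) ⊕ B)) → Prop
  | left (z : Z) : HPORel f g (Sum.inl (f z)) (Sum.inr (Sum.inl (z, 0)))
  | right (z : Z) : HPORel f g (Sum.inr (Sum.inl (z, 1))) (Sum.inr (Sum.inr (g z)))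

/-- The double mapping cylinder (standard homotopy pushout) of `f : Z → A` and `g : Z → B`. -/
def HPO (f : C(Z, A)) (g : C(Z, B)) : Type u := Quot (HPORel f g)

instance (f : C(Z, A)) (g : C(Z, B)) : TopologicalSpace (HPO f g) :=
  inferInstanceAs (TopologicalSpace (Quot _))

/-- Left structural map of the homotopy pushout. -/
def HPO.inl (f : C(Z, A)) (g : C(Z, B)) : C(A, HPO f g) :=
  ⟨fun a => Quot.mk _ (Sum.inl a), continuous_quot_mk.comp continuous_inl⟩

/-- Right structural map of the homotopy pushout. -/
def HPO.inr (f : C(Z, A)) (g : C(Z, B)) : C(B, HPO f g) :=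
  ⟨fun b => Quot.mk _ (Sum.inr (Sum.inr b)),
    continuous_quot_mk.comp (continuous_inr.comp continuous_inr)⟩

/-- Cylinder part of the homotopy pushout. -/
def HPO.cyl (f : C(Z, A)) (g : C(Z, B)) : C(Z × I, HPO f g) :=
  ⟨fun zt => Quot.mk _ (Sum.inr (Sum.inl zt)),
    continuous_quot_mk.comp (continuous_inr.comp continuous_inl)⟩

/-- The whisker map induced on the double mapping cylinder by a homotopy commutative square. -/
def HPO.desc (f : C(Z, A)) (g : C(Z, B)) (h : C(A, P)) (k : C(B, P))
    (H : ContinuousMap.Homotopy (h.comp f) (k.comp g)) : C(HPO f g, P) :=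
  ⟨Quot.lift (Sum.elim h (Sum.elim (fun zt => H (zt.2, zt.1)) k))
    (by
      rintro x y (⟨z⟩ | ⟨z⟩)
      · simp only [Sum.elim_inl, Sum.elim_inr]; exact (H.apply_zero z).symm
      · simp only [Sum.elim_inl, Sum.elim_inr]; exact H.apply_one z),
    continuous_quot_lift _ (by
      apply Continuous.sumElim h.continuous
      apply Continuous.sumElim _ k.continuous
      exact H.continuous.comp continuous_swap)⟩

/-- The square with legs `f, g` and cone maps `h, k` is a homotopy pushout. -/
def IsHPO (f : C(Z, A)) (g : C(Z, B)) (h : C(A, P)) (k : C(B, P)) : Prop :=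
  ∃ H : ContinuousMap.Homotopy (h.comp f) (k.comp g), IsHEquiv (HPO.desc f g h k H)

end HPO

section HPB

variable {A B X P : Type u} [TopologicalSpace A] [TopologicalSpace B] [TopologicalSpace X]
  [TopologicalSpace P]

/-- The standard homotopy pullback of `f : A → X` and `g : B → X`. -/
def HPB (f : C(A, X)) (g : C(B, X)) : Type u :=
  { p : A × C(I, X) × B // p.2.1 0 = f p.1 ∧ p.2.1 1 = g p.2.2 }

instance (f : C(A, X)) (g : C(B, X)) : TopologicalSpace (HPB f g) :=
  inferInstanceAs (TopologicalSpace (Subtype _))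

/-- First projection of the homotopy pullback. -/
def HPB.fst (f : C(A, X)) (g : C(B, X)) : C(HPB f g, A) :=
  ⟨fun p => p.1.1, continuous_fst.comp continuous_subtype_val⟩

/-- Second projection of the homotopy pullback. -/
def HPB.snd (f : C(A, X)) (g : C(B, X)) : C(HPB f g, B) :=
  ⟨fun p => p.1.2.2, continuous_snd.comp (continuous_snd.comp continuous_subtype_val)⟩

/-- The tautological homotopy over the homotopy pullback. -/
def HPB.pathHomotopy (f : C(A, X)) (g : C(B, X)) :
    ContinuousMap.Homotopy (g.comp (HPB.snd f g)) (f.comp (HPB.fst f g)) where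
  toFun := fun q => q.2.1.2.1 (σ q.1)
  continuous_toFun := by
    have h1 : Continuous fun q : I × HPB f g => (q.2.1.2.1, σ q.1) := by
      refine Continuous.prodMk ?_ (continuous_symm.comp continuous_fst)
      exact (continuous_fst.comp (continuous_snd.comp continuous_subtype_val)).comp continuous_snd
    exact ContinuousEval.continuous_eval.comp h1
  map_zero_left := fun p => by simp [HPB.snd, p.2.2]
  map_one_left := fun p => by simp [HPB.fst, p.2.1]

/-- The comparison (whisker) map into the homotopy pullback. -/
def HPB.lift (f : C(A, X)) (g : C(B, X)) (p : C(P, A)) (q : C(P, B))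
    (H : ContinuousMap.Homotopy (f.comp p) (g.comp q)) : C(P, HPB f g) :=
  ⟨fun y => ⟨(p y, ((H.toContinuousMap.comp ⟨Prod.swap, continuous_swap⟩).curry y, q y)),
      by simp⟩,
    by
      apply Continuous.subtype_mk
      exact p.continuous.prodMk
        (((H.toContinuousMap.comp ⟨Prod.swap, continuous_swap⟩).curry).continuous.prodMk
          q.continuous)⟩

/-- The square with cospan `f, g` and cone maps `p, q` is a homotopy pullback. -/
def IsHPB (f : C(A, X)) (g : C(B, X)) (p : C(P, A)) (q : C(P, B)) : Prop :=
  ∃ H : ContinuousMap.Homotopy (f.comp p) (g.comp q), IsHEquiv (HPB.lift f g p q H)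

end HPB

/-- One step of the Ganea construction: a space over `X` under `A`. -/
structure GaneaStep (A X : Type u) [TopologicalSpace A] [TopologicalSpace X] where
  G : Type u
  inst : TopologicalSpace G
  g : @ContinuousMap G X inst _
  α : @ContinuousMap A G _ inst

attribute [instance] GaneaStep.inst

/-- The Ganea construction of a map `ι : A → X`. -/
def ganea {A X : Type u} [TopologicalSpace A] [TopologicalSpace X] (ι : C(A, X)) :
    ℕ → GaneaStep A X
  | 0 => { G := A, inst := inferInstance, g := ι, α := ContinuousMap.id A }
  | n + 1 =>
    let s := ganea ι n
    { G := HPO (HPB.snd s.g ι) (HPB.fst s.g ι)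
      inst := inferInstance
      g := HPO.desc (HPB.snd s.g ι) (HPB.fst s.g ι) ι s.g (HPB.pathHomotopy s.g ι)
      α := HPO.inl (HPB.snd s.g ι) (HPB.fst s.g ι) }

/-- Least natural number (as `ℕ∞`) satisfying a predicate. -/
def theNat (P : ℕ → Prop) : ℕ∞ := sInf ((Nat.cast : ℕ → ℕ∞) '' { n | P n })

/-- `secat ι ≤ n` : the `n`-th Ganea map admits a homotopy section. -/
def secatLe {A X : Type u} [TopologicalSpace A] [TopologicalSpace X] (ι : C(A, X)) (n : ℕ) :
    Prop :=
  ∃ s : C(X, (ganea ι n).G), ((ganea ι n).g.comp s).Homotopic (ContinuousMap.id X)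

/-- `relcat ι ≤ n` : the `n`-th Ganea map admits a homotopy section compatible with `α_n`. -/
def relcatLe {A X : Type u} [TopologicalSpace A] [TopologicalSpace X] (ι : C(A, X)) (n : ℕ) :
    Prop :=
  ∃ s : C(X, (ganea ι n).G), ((ganea ι n).g.comp s).Homotopic (ContinuousMap.id X) ∧
    (s.comp ι).Homotopic (ganea ι n).α

/-- Sectional category (James), Ganea style. -/
def secat {A X : Type u} [TopologicalSpace A] [TopologicalSpace X] (ι : C(A, X)) : ℕ∞ :=
  theNat (secatLe ι)

/-- Relative category of a map. -/
def relcat {A X : Type u} [TopologicalSpace A] [TopologicalSpace X] (ι : C(A, X)) : ℕ∞ :=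
  theNat (relcatLe ι)

/-- `PushcatLe A X tX ι n` : `ι` is obtained from a homotopy equivalence by at most `n`
successive homotopy pushouts along maps to `A`. -/
inductive PushcatLe (A : Type u) [tA : TopologicalSpace A] :
    ∀ (X : Type u) (tX : TopologicalSpace X), @ContinuousMap A X tA tX → ℕ → Prop
  | equiv {X : Type u} [tX : TopologicalSpace X] (ι : C(A, X)) :
      IsHEquiv ι → PushcatLe A X tX ι 0
  | step {X X' Z : Type u} [tX : TopologicalSpace X] [tX' : TopologicalSpace X']
      [tZ : TopologicalSpace Z] {ι : C(A, X)} {n : ℕ} (h : PushcatLe A X tX ι n)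
      (ρ : C(Z, A)) (τ : C(Z, X)) (ι' : C(A, X')) (χ : C(X, X'))
      (hpo : IsHPO ρ τ ι' χ) (hχ : (χ.comp ι).Homotopic ι') :
      PushcatLe A X' tX' ι' (n + 1)
  | homotopic {X : Type u} [tX : TopologicalSpace X] {ι ι' : C(A, X)} {n : ℕ}
      (h : PushcatLe A X tX ι n) (hh : ι.Homotopic ι') : PushcatLe A X tX ι' n

/-- `RelcatLe` : as `PushcatLe`, with a compatible section at each step. -/
inductive RelcatLe (A : Type u) [tA : TopologicalSpace A] :
    ∀ (X : Type u) (tX : TopologicalSpace X), @ContinuousMap A X tA tX → ℕ → Prop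
  | equiv {X : Type u} [tX : TopologicalSpace X] (ι : C(A, X)) :
      IsHEquiv ι → RelcatLe A X tX ι 0
  | step {X X' Z : Type u} [tX : TopologicalSpace X] [tX' : TopologicalSpace X']
      [tZ : TopologicalSpace Z] {ι : C(A, X)} {n : ℕ} (h : RelcatLe A X tX ι n)
      (ρ : C(Z, A)) (τ : C(Z, X)) (ι' : C(A, X')) (χ : C(X, X'))
      (hpo : IsHPO ρ τ ι' χ) (hχ : (χ.comp ι).Homotopic ι')
      (σ₀ : C(A, Z)) (hσ : (ρ.comp σ₀).Homotopic (ContinuousMap.id A))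
      (hτσ : (τ.comp σ₀).Homotopic ι) :
      RelcatLe A X' tX' ι' (n + 1)
  | homotopic {X : Type u} [tX : TopologicalSpace X] {ι ι' : C(A, X)} {n : ℕ}
      (h : RelcatLe A X tX ι n) (hh : ι.Homotopic ι') : RelcatLe A X tX ι' n

/-- Strong pushout category of a map. -/
def Pushcat {A X : Type u} [tA : TopologicalSpace A] [tX : TopologicalSpace X]
    (ι : C(A, X)) : ℕ∞ :=
  theNat (fun n => PushcatLe A X tX ι n)

/-- Strong relative category of a map. -/
def Relcat {A X : Type u} [tA : TopologicalSpace A] [tX : TopologicalSpace X]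
    (ι : C(A, X)) : ℕ∞ :=
  theNat (fun n => RelcatLe A X tX ι n)

/-- Lusternik–Schnirelmann category (Ganea-normalized) of a pointed space. -/
def catP (X : Type u) [TopologicalSpace X] (x₀ : X) : ℕ∞ :=
  secat (ContinuousMap.const PUnit.{u + 1} x₀)

/-- Strong (Fox) category of a pointed space. -/
def CatP (X : Type u) [TopologicalSpace X] (x₀ : X) : ℕ∞ :=
  Relcat (ContinuousMap.const PUnit.{u + 1} x₀)

/-- `g : A → X` is the homotopy cofibre of `f : Y → A` (with cone point `x₀`). -/
def IsHCofiberPt {Y A X : Type u} [TopologicalSpace Y] [TopologicalSpace A] [TopologicalSpace X]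
    (f : C(Y, A)) (g : C(A, X)) (x₀ : X) : Prop :=
  IsHPO f (ContinuousMap.const Y (PUnit.unit : PUnit.{u + 1})) g
    (ContinuousMap.const PUnit.{u + 1} x₀)

/-- The diagonal map. -/
def diagMap (X : Type u) [TopologicalSpace X] : C(X, X × X) :=
  ⟨fun x => (x, x), continuous_id.prodMk continuous_id⟩

/-- Topological complexity (Farber, normalized). -/
def compl (X : Type u) [TopologicalSpace X] : ℕ∞ := secat (diagMap X)

/-- Strong complexity: strong relative category of the diagonal. -/
def Compl' (X : Type u) [TopologicalSpace X] : ℕ∞ := Relcat (diagMap X)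

end


/-!
The Ganea construction is functorial for homotopy commutative squares: from a homotopy
`H : ι ∘ u ≃ v ∘ κ` one builds, by induction on `n`, maps `φₙ : Gₙ(κ) → Gₙ(ι)` with
`gₙ(ι) ∘ φₙ ≃ v ∘ gₙ(κ)` and `φₙ ∘ αₙ(κ) = αₙ(ι) ∘ u`. Given `K : gₙ(ι) ∘ φₙ ≃ v ∘ gₙ(κ)`, a point
`(x, γ, b)` of the homotopy pullback goes to `(φₙ x, Kₓ ⬝ v ∘ γ ⬝ H_b⁻¹, u b)`, and on the cylinder
of `Gₙ₊₁` the homotopy between the two Ganea maps fills the square with sides `Kₓ`, `v ∘ γ`, `H_b`.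

For the retract square `ι_X ∘ ζ ≃ f ∘ κ_Y`, a homotopy section `σ` of `gₙ(κ_Y)` with
`σ ∘ κ_Y ≃ αₙ(κ_Y)` yields the section `φₙ ∘ σ ∘ s` of `gₙ(ι_X)`, and
`φₙ ∘ σ ∘ s ∘ ι_X ≃ φₙ ∘ σ ∘ κ_Y ∘ t ≃ αₙ(ι_X) ∘ ζ ∘ t ≃ αₙ(ι_X)`.
-/

open ContinuousMap Set

namespace ContinuousMap.Homotopy

variable {Q P : Type*} [TopologicalSpace Q] [TopologicalSpace P] {h₀ h₁ k₀ k₁ : C(Q, P)}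
  (h : Homotopy h₀ h₁) (γ : Homotopy h₁ k₁) (k : Homotopy k₀ k₁)

/-- At time `t`, the path `s ↦ zigzagFiller h γ k (q, s, t)` runs along `h` from time `t` to `1`,
then along `γ`, then back along `k` to time `t`. -/
noncomputable def zigzagFiller : C(Q × I × I, P) where
  toFun x :=
    if 3 * (x.2.1 : ℝ) ≤ 1 - x.2.2 then h (projIcc 0 1 zero_le_one (x.2.2 + 3 * x.2.1), x.1)
    else if 3 * (x.2.1 : ℝ) ≤ 2 + x.2.2 then
      γ (projIcc 0 1 zero_le_one ((3 * x.2.1 - (1 - x.2.2)) / (1 + 2 * x.2.2)), x.1)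
    else k (projIcc 0 1 zero_le_one (x.2.2 + 3 - 3 * x.2.1), x.1)
  continuous_toFun := by
    have hden : ∀ x : Q × I × I, (1 + 2 * x.2.2 : ℝ) ≠ 0 := fun x => by
      linarith [x.2.2.2.1]
    refine Continuous.if_le (by fun_prop) (Continuous.if_le ?_ (by fun_prop) (by fun_prop)
      (by fun_prop) fun x hx => ?_) (by fun_prop) (by fun_prop) fun x hx => ?_
    · exact γ.continuous.comp <| (continuous_projIcc.comp <|
        (by fun_prop : Continuous fun x : Q × I × I => 3 * (x.2.1 : ℝ) - (1 - x.2.2)).div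
          (by fun_prop) hden).prodMk continuous_fst
    · rw [hx, projIcc_eq_one.2 (by
        rw [show (2 + x.2.2 - (1 - x.2.2) : ℝ) = 1 + 2 * x.2.2 by ring, div_self (hden x)]),
        projIcc_eq_one.2 (by linarith), γ.apply_one, k.apply_one]
    · rw [if_pos (by linarith [x.2.2.2.1]), hx, projIcc_eq_one.2 (by linarith),
        projIcc_eq_zero.2 (by simp), h.apply_one, γ.apply_zero]

variable {h γ k}

theorem zigzagFiller_left (q : Q) (t : I) : zigzagFiller h γ k (q, 0, t) = h (t, q) := by
  simp [zigzagFiller, t.2.2]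

theorem zigzagFiller_right (q : Q) (t : I) : zigzagFiller h γ k (q, 1, t) = k (t, q) := by
  have ht₀ : (0 : ℝ) ≤ t := t.2.1
  have ht₁ : (t : ℝ) ≤ 1 := t.2.2
  simp only [zigzagFiller, coe_mk, Icc.coe_one, mul_one]
  rw [if_neg (by linarith)]
  split_ifs with ht
  · obtain rfl : t = 1 := Subtype.ext (by rw [Icc.coe_one]; linarith)
    rw [Icc.coe_one, projIcc_eq_one.2 (by norm_num), γ.apply_one, k.apply_one]
  · simp

theorem zigzagFiller_time_one (q : Q) (s : I) : zigzagFiller h γ k (q, s, 1) = γ (s, q) := by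
  have hs₀ : (0 : ℝ) ≤ s := s.2.1
  have hs₁ : (s : ℝ) ≤ 1 := s.2.2
  simp only [zigzagFiller, coe_mk, Icc.coe_one]
  split_ifs with hs hs'
  · obtain rfl : s = 0 := Subtype.ext (by rw [Icc.coe_zero]; linarith)
    simp
  · rw [show (3 * s - (1 - 1)) / (1 + 2 * 1) = (s : ℝ) by ring, projIcc_val]
  · linarith

variable (h γ k)

/-- The homotopy `h ⬝ γ ⬝ k⁻¹`. -/
noncomputable def zigzag : Homotopy h₀ k₀ where
  toFun x := zigzagFiller h γ k (x.2, x.1, 0)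
  continuous_toFun := by fun_prop
  map_zero_left q := by simp [zigzagFiller_left]
  map_one_left q := by simp [zigzagFiller_right]

end ContinuousMap.Homotopy

namespace HPO

variable {Z A B P Z' A' B' : Type u} [TopologicalSpace Z] [TopologicalSpace A] [TopologicalSpace B]
  [TopologicalSpace P] [TopologicalSpace Z'] [TopologicalSpace A'] [TopologicalSpace B']
  {f : C(Z, A)} {g : C(Z, B)}

theorem ind {p : HPO f g → Prop} (inl : ∀ a, p (HPO.inl f g a)) (cyl : ∀ zt, p (HPO.cyl f g zt))
    (inr : ∀ b, p (HPO.inr f g b)) (x : HPO f g) : p x := by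
  induction x using Quot.ind with
  | mk y => rcases y with a | zt | b; exacts [inl a, cyl zt, inr b]

theorem inl_apply_eq_cyl_zero (z : Z) : HPO.inl f g (f z) = HPO.cyl f g (z, 0) :=
  Quot.sound (.left z)

theorem cyl_one_eq_inr (z : Z) : HPO.cyl f g (z, 1) = HPO.inr f g (g z) :=
  Quot.sound (.right z)

variable (f g) {f' : C(Z', A')} {g' : C(Z', B')}

noncomputable def map (z : C(Z, Z')) (a : C(A, A')) (b : C(B, B')) (hf : ∀ x, f' (z x) = a (f x))
    (hg : ∀ x, g' (z x) = b (g x)) : C(HPO f g, HPO f' g') where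
  toFun := Quot.lift (Sum.elim (fun x => HPO.inl f' g' (a x))
    (Sum.elim (fun zt => HPO.cyl f' g' (z zt.1, zt.2)) (fun x => HPO.inr f' g' (b x)))) <| by
      rintro _ _ (⟨x⟩ | ⟨x⟩)
      · simpa [← hf] using inl_apply_eq_cyl_zero (f := f') (g := g') (z x)
      · simpa [← hg] using cyl_one_eq_inr (f := f') (g := g') (z x)
  continuous_toFun := continuous_quot_lift _ <| by
    refine Continuous.sumElim (by fun_prop) (Continuous.sumElim ?_ (by fun_prop))
    exact (HPO.cyl f' g').continuous.comp (by fun_prop)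

variable {f g}

theorem homotopic_of_filler {F₀ F₁ : C(HPO f g, P)}
    (KA : Homotopy (F₀.comp (HPO.inl f g)) (F₁.comp (HPO.inl f g)))
    (KB : Homotopy (F₀.comp (HPO.inr f g)) (F₁.comp (HPO.inr f g)))
    (Θ : C(Z × I × I, P))
    (h₀ : ∀ z τ, Θ (z, τ, 0) = F₀ (HPO.cyl f g (z, τ)))
    (h₁ : ∀ z τ, Θ (z, τ, 1) = F₁ (HPO.cyl f g (z, τ)))
    (hA : ∀ z t, Θ (z, 0, t) = KA (t, f z)) (hB : ∀ z t, Θ (z, 1, t) = KB (t, g z)) :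
    F₀.Homotopic F₁ := by
  let paths {X : Type u} [TopologicalSpace X] {F G : C(X, P)} (K : Homotopy F G) : C(X, C(I, P)) :=
    (K.toContinuousMap.comp ⟨Prod.swap, continuous_swap⟩).curry
  let Φ : C(HPO f g, C(I, P)) := HPO.desc f g (paths KA) (paths KB)
    { toContinuousMap := (Θ.comp ⟨fun x => (x.1.2, x.1.1, x.2), by fun_prop⟩).curry
      map_zero_left z := by ext t; exact hA z t
      map_one_left z := by ext t; exact hB z t }
  refine ⟨{ toFun x := Φ x.2 x.1
            continuous_toFun := by fun_prop
            map_zero_left := HPO.ind ?_ ?_ ?_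
            map_one_left := HPO.ind ?_ ?_ ?_ }⟩
  · exact KA.apply_zero
  · exact fun zt => h₀ zt.1 zt.2
  · exact KB.apply_zero
  · exact KA.apply_one
  · exact fun zt => h₁ zt.1 zt.2
  · exact KB.apply_one

end HPO

section GaneaStep

variable {A A' G G' X X' : Type u} [TopologicalSpace A] [TopologicalSpace A']
  [TopologicalSpace G] [TopologicalSpace G'] [TopologicalSpace X] [TopologicalSpace X']
  {g : C(G, X)} {a : C(A, X)} {g' : C(G', X')} {a' : C(A', X')}
  {φ : C(G, G')} {u : C(A, A')} {v : C(X, X')}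
  (K : ContinuousMap.Homotopy (g'.comp φ) (v.comp g))
  (H : ContinuousMap.Homotopy (a'.comp u) (v.comp a))

noncomputable def HPB.fillerOfHomotopies : C(HPB g a × I × I, X') :=
  Homotopy.zigzagFiller (H.compContinuousMap (HPB.snd g a))
    ((ContinuousMap.Homotopy.refl v).comp (HPB.pathHomotopy g a))
    (K.compContinuousMap (HPB.fst g a))

noncomputable def HPB.mapOfHomotopies : C(HPB g a, HPB g' a') :=
  HPB.lift g' a' (φ.comp (HPB.fst g a)) (u.comp (HPB.snd g a))
    (Homotopy.zigzag (H.compContinuousMap (HPB.snd g a))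
      ((ContinuousMap.Homotopy.refl v).comp (HPB.pathHomotopy g a))
      (K.compContinuousMap (HPB.fst g a))).symm

noncomputable def ganeaStepMap :
    C(HPO (HPB.snd g a) (HPB.fst g a), HPO (HPB.snd g' a') (HPB.fst g' a')) :=
  HPO.map _ _ (HPB.mapOfHomotopies K H) u φ (fun _ => rfl) (fun _ => rfl)

theorem ganeaStepMap_homotopic :
    ((HPO.desc (HPB.snd g' a') (HPB.fst g' a') a' g' (HPB.pathHomotopy g' a')).comp
      (ganeaStepMap K H)).Homotopic
    (v.comp (HPO.desc (HPB.snd g a) (HPB.fst g a) a g (HPB.pathHomotopy g a))) :=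
  HPO.homotopic_of_filler H K (HPB.fillerOfHomotopies K H)
    (fun p τ => by
      -- `pathHomotopy` reads the lifted path `zigzag.symm` backwards
      show _ = HPB.fillerOfHomotopies K H (p, σ (σ τ), 0)
      rw [symm_symm])
    (fun p τ => Homotopy.zigzagFiller_time_one p τ)
    (fun p t => Homotopy.zigzagFiller_left p t)
    (fun p t => Homotopy.zigzagFiller_right p t)

end GaneaStep

theorem exists_ganea_map {A B X Y : Type u} [TopologicalSpace A] [TopologicalSpace B]
    [TopologicalSpace X] [TopologicalSpace Y] {ι : C(A, X)} {κ : C(B, Y)} {u : C(B, A)}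
    {v : C(Y, X)} (H : (ι.comp u).Homotopic (v.comp κ)) (n : ℕ) :
    ∃ φ : C((ganea κ n).G, (ganea ι n).G),
      ((ganea ι n).g.comp φ).Homotopic (v.comp (ganea κ n).g) ∧
        φ.comp (ganea κ n).α = (ganea ι n).α.comp u := by
  induction n with
  | zero => exact ⟨u, H, rfl⟩
  | succ n ih =>
    obtain ⟨φ, ⟨K⟩, -⟩ := ih
    obtain ⟨H⟩ := H
    exact ⟨ganeaStepMap K H, ganeaStepMap_homotopic K H, rfl⟩

theorem relcatLe_of_homotopy_retract {A B X Y : Type u} [TopologicalSpace A]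
    [TopologicalSpace B] [TopologicalSpace X] [TopologicalSpace Y]
    {ιX : C(A, X)} {κY : C(B, Y)} {t : C(A, B)} {ζ : C(B, A)} {s : C(X, Y)} {f : C(Y, X)}
    (h1 : (κY.comp t).Homotopic (s.comp ιX)) (h2 : (ιX.comp ζ).Homotopic (f.comp κY))
    (h3 : (f.comp s).Homotopic (ContinuousMap.id X))
    (h4 : (ζ.comp t).Homotopic (ContinuousMap.id A)) {n : ℕ} (hκ : relcatLe κY n) :
    relcatLe ιX n := by
  obtain ⟨sec, hsecg, hsecα⟩ := hκ
  obtain ⟨φ, hφg, hφα⟩ := exists_ganea_map h2 n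
  refine ⟨φ.comp (sec.comp s), ?_, ?_⟩
  · have hg : ((ganea ιX n).g.comp (φ.comp (sec.comp s))).Homotopic (f.comp s) :=
      (hφg.comp (Homotopic.refl (sec.comp s))).trans
        ((Homotopic.refl f).comp (hsecg.comp (Homotopic.refl s)))
    exact hg.trans h3
  · have hα : ((φ.comp sec).comp (κY.comp t)).Homotopic (((ganea ιX n).α.comp ζ).comp t) := by
      rw [← hφα]
      exact ((Homotopic.refl φ).comp hsecα).comp (Homotopic.refl t)
    exact ((Homotopic.refl (φ.comp sec)).comp h1.symm).trans
      (hα.trans ((Homotopic.refl _).comp h4))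

theorem theNat_le_theNat {P Q : ℕ → Prop} (h : ∀ n, P n → Q n) : theNat Q ≤ theNat P :=
  sInf_le_sInf (Set.image_mono h)

/-- Relative category is monotone under homotopy retracts of maps. -/
theorem relcat_le_of_homotopy_retract {A B X Y : Type u} [TopologicalSpace A]
    [TopologicalSpace B] [TopologicalSpace X] [TopologicalSpace Y]
    (ιX : C(A, X)) (κY : C(B, Y)) (t : C(A, B)) (ζ : C(B, A)) (s : C(X, Y)) (f : C(Y, X))
    (h1 : (κY.comp t).Homotopic (s.comp ιX)) (h2 : (ιX.comp ζ).Homotopic (f.comp κY))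
    (h3 : (f.comp s).Homotopic (ContinuousMap.id X))
    (h4 : (ζ.comp t).Homotopic (ContinuousMap.id A)) :
    relcat ιX ≤ relcat κY :=
  theNat_le_theNat fun _ => relcatLe_of_homotopy_retract h1 h2 h3 h4
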